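/- arXiv:0910.0264 — 2 statements merged into one kernel-verified Lean document; each statement's English description precedes it below -/
import Mathlib

section
/- If f is twice differentiable at t = 1 with f(1) = 0, f'(1) = 0, and f''(1) > 0, and P_n is a sequence of probability mass functions on a finite set converging pointwise to a fixed fully supported Q with P_n ≠ Q, then D_f(P_n‖Q) / D_2(P_n‖Q) → f''(1)/2 as n → ∞. -/
open Filter Topology Asymptotics

/-!
By Peano's form of Taylor's theorem, `f x = c / 2 * (x - 1) ^ 2 + o((x - 1) ^ 2)` as `x → 1`.
Since `P n a / Q a → 1` and the χ² divergence is the `Q`-weighted sum of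
`(P n a / Q a - 1) ^ 2`, weighting by `Q a` and summing over the finite set gives
`D_f(P n‖Q) = c / 2 * D_2(P n‖Q) + o(D_2(P n‖Q))`; divide by `D_2(P n‖Q) > 0`.
-/

theorem isLittleO_sub_taylor_two {f f' : ℝ → ℝ} {x₀ c : ℝ}
    (hf : ∀ᶠ x in 𝓝 x₀, HasDerivAt f (f' x) x) (hf' : HasDerivAt f' c x₀) :
    (fun x => f x - f x₀ - f' x₀ * (x - x₀) - c / 2 * (x - x₀) ^ 2) =o[𝓝 x₀]
      fun x => (x - x₀) ^ 2 := by
  obtain ⟨δ, hδ, hball⟩ := Metric.eventually_nhds_iff_ball.1 hf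
  have hs : 𝓝[Metric.ball x₀ δ] x₀ = 𝓝 x₀ := nhdsWithin_eq_nhds.2 (Metric.ball_mem_nhds x₀ hδ)
  have hderiv : ∀ x ∈ Metric.ball x₀ δ, HasDerivWithinAt
      (fun x => f x - f x₀ - f' x₀ * (x - x₀) - c / 2 * (x - x₀) ^ 2)
      (f' x - f' x₀ - c * (x - x₀)) (Metric.ball x₀ δ) x := by
    intro x hx
    have hlin := (hasDerivAt_id x).sub_const x₀
    refine (((hball x hx).sub_const _).sub (hlin.const_mul _) |>.sub
      ((hlin.pow 2).const_mul _)).congr_deriv ?_ |>.hasDerivWithinAt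
    simp only [id, Nat.cast_ofNat]
    ring
  have hderiv_small : (fun x => f' x - f' x₀ - c * (x - x₀)) =o[𝓝[Metric.ball x₀ δ] x₀]
      fun x => (x - x₀) ^ 1 := by
    simp only [hs, pow_one]
    simpa [mul_comm] using hasDerivAt_iff_isLittleO.1 hf'
  simpa [hs] using (convex_ball x₀ δ).isLittleO_pow_succ_real (Metric.mem_ball_self hδ)
    hderiv hderiv_small

theorem isLittleO_perspective_of_tendsto {α : Type*} {l : Filter α} {φ : ℝ → ℝ} {p : α → ℝ}
    {q : ℝ} (hq : q ≠ 0) (hφ : φ =o[𝓝 1] fun y => (y - 1) ^ 2) (hp : Tendsto p l (𝓝 q)) :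
    (fun x => q * φ (p x / q)) =o[l] fun x => (p x - q) ^ 2 / q := by
  have hp' : Tendsto (fun x => p x / q) l (𝓝 1) := by simpa [hq] using hp.div_const q
  refine ((hφ.comp_tendsto hp').const_mul_left q).const_mul_right hq |>.congr_right fun x => ?_
  simp only [Function.comp_apply]
  field_simp

theorem tendsto_div_of_isLittleO_sub_mul {α : Type*} {l : Filter α} {f g : α → ℝ} {c : ℝ}
    (hg : ∀ᶠ x in l, g x ≠ 0) (h : (fun x => f x - c * g x) =o[l] g) :
    Tendsto (fun x => f x / g x) l (𝓝 c) := by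
  rw [← tendsto_sub_nhds_zero_iff]
  refine h.tendsto_div_nhds_zero.congr' ?_
  filter_upwards [hg] with x hx
  rw [sub_div, mul_div_cancel_right₀ _ hx]

theorem chiSq_pos {E : Type*} [Fintype E] {P Q : E → ℝ} (hQ : ∀ a, 0 < Q a) (hPQ : P ≠ Q) :
    0 < ∑ a, (P a - Q a) ^ 2 / Q a := by
  obtain ⟨a, ha⟩ := Function.ne_iff.1 hPQ
  refine Finset.sum_pos' (fun b _ => by have := hQ b; positivity) ⟨a, Finset.mem_univ a, ?_⟩
  have := hQ a
  have : P a - Q a ≠ 0 := sub_ne_zero.2 ha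
  positivity

theorem fDivergence_div_chiSq_tendsto_general {E : Type*} [Fintype E]
    (Q : E → ℝ) (hQpos : ∀ a, 0 < Q a)
    (P : ℕ → E → ℝ)
    (hPne : ∀ n, P n ≠ Q)
    (hPtend : ∀ a, Tendsto (fun n => P n a) atTop (nhds (Q a)))
    (f f' : ℝ → ℝ) (c : ℝ)
    (hf1 : f 1 = 0)
    (hderiv : ∀ᶠ x in nhds (1 : ℝ), HasDerivAt f (f' x) x)
    (hf'1 : f' 1 = 0) (hderiv2 : HasDerivAt f' c 1) :
    Tendsto
      (fun n => (∑ a, Q a * f (P n a / Q a)) / (∑ a, (P n a - Q a) ^ 2 / Q a))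
      atTop (nhds (c / 2)) := by
  have htaylor : (fun y => f y - c / 2 * (y - 1) ^ 2) =o[𝓝 1] fun y => (y - 1) ^ 2 := by
    simpa [hf1, hf'1] using isLittleO_sub_taylor_two hderiv hderiv2
  have hterms := IsLittleO.sum_congr (s := Finset.univ) fun a _ =>
    isLittleO_perspective_of_tendsto (hQpos a).ne' htaylor (hPtend a)
  refine tendsto_div_of_isLittleO_sub_mul
    (Eventually.of_forall fun n => (chiSq_pos hQpos (hPne n)).ne')
    (hterms.congr (fun n => ?_) fun n => ?_)
  · rw [Finset.mul_sum, ← Finset.sum_sub_distrib]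
    refine Finset.sum_congr rfl fun a _ => ?_
    have := (hQpos a).ne'
    field_simp
  · refine Finset.sum_congr rfl fun a _ => Real.norm_of_nonneg ?_
    have := hQpos a
    positivity

/-- If `f` is twice differentiable at `1` with `f 1 = 0`, `f' 1 = 0` and `f'' 1 = c > 0`,
and `P n` are probability mass functions on a finite set converging pointwise to a fixed
fully supported `Q` with `P n ≠ Q`, then `D_f(P n‖Q) / D_2(P n‖Q) → c / 2`. -/
theorem fDivergence_div_chiSq_tendsto {E : Type*} [Fintype E]
    (Q : E → ℝ) (hQpos : ∀ a, 0 < Q a) (hQsum : ∑ a, Q a = 1)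
    (P : ℕ → E → ℝ) (hPnonneg : ∀ n a, 0 ≤ P n a) (hPsum : ∀ n, ∑ a, P n a = 1)
    (hPne : ∀ n, P n ≠ Q)
    (hPtend : ∀ a, Tendsto (fun n => P n a) atTop (nhds (Q a)))
    (f f' : ℝ → ℝ) (c : ℝ)
    (hconv : ConvexOn ℝ (Set.Ioi (0 : ℝ)) f) (hf1 : f 1 = 0)
    (hderiv : ∀ᶠ x in nhds (1 : ℝ), HasDerivAt f (f' x) x)
    (hf'1 : f' 1 = 0) (hderiv2 : HasDerivAt f' c 1) (hc : 0 < c) :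
    Tendsto
      (fun n => (∑ a, Q a * f (P n a / Q a)) / (∑ a, (P n a - Q a) ^ 2 / Q a))
      atTop (nhds (c / 2)) :=
  fDivergence_div_chiSq_tendsto_general Q hQpos P hPne hPtend f f' c hf1 hderiv hf'1 hderiv2
end

section
/- Let (X_n) be an ergodic Markov chain on a finite state space E with stationary distribution Π. Let g : E → ℝ, S_n(g) = Σ_{j=1}^n g(X_j), and suppose the asymptotic variance σ_g² = 0. Then almost surely lim_{n→∞} (1/√n)[S_n(g) − E_Π(S_n(g))] = 0. -/
/-!
Centre `g` at its stationary mean: `ḡ = g - Π g`. Doeblin's condition (`Pⁿ⁰` has all entries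
`≥ δ > 0`) makes `Pᵐ ḡ` decay geometrically, so `h = ∑ₘ Pᵐ ḡ` solves the Poisson equation
`h - P h = ḡ`, and the asymptotic variance equals `∑ᵢⱼ Π(i) P(i,j) (h(j) - (P h)(i))²`. If it
vanishes, then `h(j) = h(i) - ḡ(i)` across every transition `i → j` of positive stationary
probability, which almost surely are all the transitions of the chain. The centred sums then
telescope to `h(X₀) - h(Xₙ)`, which is bounded.
-/

open Filter Finset Matrix MeasureTheory Set Topology

namespace MarkovChain

variable {E : Type*}

section

variable [Fintype E]

lemma abs_le_of_dotProduct_eq_zero {π v : E → ℝ} (hπ0 : ∀ i, 0 ≤ π i) (hπ1 : ∑ i, π i = 1)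
    (hv0 : π ⬝ᵥ v = 0) {a w : ℝ} (hv : ∀ i, v i ∈ Icc a (a + w)) (i : E) : |v i| ≤ w := by
  have h0 : (0 : ℝ) ∈ Icc a (a + w) :=
    hv0 ▸ (convex_Icc a (a + w)).sum_mem (fun i _ => hπ0 i) hπ1 fun i _ => hv i
  rw [abs_le]
  constructor <;> linarith [h0.1, h0.2, (hv i).1, (hv i).2]

/-- Doeblin's minorisation: `Q - δ` is a nonnegative matrix with row sums `1 - |E| δ`. -/
lemma mulVec_mem_Icc_of_le_entries {Q : Matrix E E ℝ} (hQ : ∀ i, ∑ j, Q i j = 1) {δ : ℝ}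
    (hδ : ∀ i j, δ ≤ Q i j) {v : E → ℝ} {a b : ℝ} (hv : ∀ l, v l ∈ Icc a b) (i : E) :
    (Q *ᵥ v) i ∈ Icc ((1 - Fintype.card E * δ) * a + δ * ∑ l, v l)
      ((1 - Fintype.card E * δ) * b + δ * ∑ l, v l) := by
  have hsplit : (Q *ᵥ v) i = ∑ l, (Q i l - δ) * v l + δ * ∑ l, v l := by
    simp only [mulVec, dotProduct, mul_sum, ← sum_add_distrib]
    exact sum_congr rfl fun l _ => by ring
  have hrow : ∑ l, (Q i l - δ) = 1 - Fintype.card E * δ := by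
    rw [sum_sub_distrib, hQ i, sum_const, card_univ, nsmul_eq_mul]
  rw [hsplit, ← hrow, sum_mul, sum_mul]
  exact ⟨add_le_add (sum_le_sum fun l _ =>
      mul_le_mul_of_nonneg_left (hv l).1 (sub_nonneg.2 (hδ i l))) le_rfl,
    add_le_add (sum_le_sum fun l _ =>
      mul_le_mul_of_nonneg_left (hv l).2 (sub_nonneg.2 (hδ i l))) le_rfl⟩

lemma summable_pow_div {c : ℝ} (hc0 : 0 ≤ c) (hc1 : c < 1) (n : ℕ) [NeZero n] :
    Summable fun m : ℕ => c ^ (m / n) := by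
  have hprod : Summable fun p : ℕ × Fin n => c ^ p.1 * 1 :=
    (summable_geometric_of_lt_one hc0 hc1).mul_of_nonneg (hasSum_fintype _).summable
      (fun _ => pow_nonneg hc0 _) fun _ => zero_le_one
  simpa [Function.comp_def] using (Nat.divModEquiv n).summable_iff.2 hprod

variable [DecidableEq E]

lemma vecMul_pow_eq_self {P : Matrix E E ℝ} {π : E → ℝ} (hπs : π ᵥ* P = π) (n : ℕ) :
    π ᵥ* P ^ n = π := by
  induction n with
  | zero => simp
  | succ n ih => rw [pow_succ, ← vecMul_vecMul, ih, hπs]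

lemma mulVec_mem_Icc_of_mem_rowStochastic {M : Matrix E E ℝ} (hM : M ∈ rowStochastic ℝ E)
    {v : E → ℝ} {a b : ℝ} (hv : ∀ l, v l ∈ Icc a b) (i : E) : (M *ᵥ v) i ∈ Icc a b :=
  (convex_Icc a b).sum_mem (fun _ _ => nonneg_of_mem_rowStochastic hM)
    (sum_row_of_mem_rowStochastic hM i) fun l _ => hv l

lemma exists_pow_mulVec_mem_Icc {Q : Matrix E E ℝ} (hQ : ∀ i, ∑ j, Q i j = 1) {δ : ℝ}
    (hδ : ∀ i j, δ ≤ Q i j) {v : E → ℝ} {a b : ℝ} (hv : ∀ l, v l ∈ Icc a b) (q : ℕ) :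
    ∃ a', ∀ i, (Q ^ q *ᵥ v) i ∈ Icc a' (a' + (1 - Fintype.card E * δ) ^ q * (b - a)) := by
  induction q with
  | zero => exact ⟨a, fun i => by simpa using hv i⟩
  | succ q ih =>
    obtain ⟨a', ha'⟩ := ih
    refine ⟨(1 - Fintype.card E * δ) * a' + δ * ∑ l, (Q ^ q *ᵥ v) l, fun i => ?_⟩
    rw [pow_succ' Q, ← mulVec_mulVec]
    convert mulVec_mem_Icc_of_le_entries hQ hδ ha' i using 2
    ring

lemma abs_pow_mulVec_le {P : Matrix E E ℝ} (hP : P ∈ rowStochastic ℝ E) {n₀ : ℕ} {δ : ℝ}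
    (hδ : ∀ i j, δ ≤ (P ^ n₀) i j) {π : E → ℝ} (hπ0 : ∀ i, 0 ≤ π i) (hπ1 : ∑ i, π i = 1)
    (hπs : π ᵥ* P = π) {f : E → ℝ} (hf : π ⬝ᵥ f = 0) (m : ℕ) (i : E) :
    |(P ^ m *ᵥ f) i| ≤ (1 - Fintype.card E * δ) ^ (m / n₀) * (2 * ‖f‖) := by
  obtain ⟨a, ha⟩ := exists_pow_mulVec_mem_Icc (sum_row_of_mem_rowStochastic (pow_mem hP n₀)) hδ
    (a := -‖f‖) (b := ‖f‖) (fun l => abs_le.1 (norm_le_pi_norm f l)) (m / n₀)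
  have hm : P ^ m = P ^ (m % n₀) * (P ^ n₀) ^ (m / n₀) := by
    rw [← pow_mul, ← pow_add, Nat.mod_add_div]
  refine abs_le_of_dotProduct_eq_zero hπ0 hπ1 ?_ (a := a) (fun l => ?_) i
  · rw [dotProduct_mulVec, vecMul_pow_eq_self hπs, hf]
  · rw [hm, ← mulVec_mulVec]
    convert mulVec_mem_Icc_of_mem_rowStochastic (pow_mem hP _) ha l using 3
    ring

lemma summable_pow_mulVec {P : Matrix E E ℝ} (hP : P ∈ rowStochastic ℝ E) {n₀ : ℕ}
    (hn₀ : n₀ ≠ 0) (hpos : ∀ i j, 0 < (P ^ n₀) i j) {π : E → ℝ} (hπ0 : ∀ i, 0 ≤ π i)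
    (hπ1 : ∑ i, π i = 1) (hπs : π ᵥ* P = π) {f : E → ℝ} (hf : π ⬝ᵥ f = 0) :
    Summable fun m => P ^ m *ᵥ f := by
  have : Nonempty E := by
    by_contra hE
    simp [not_nonempty_iff.1 hE] at hπ1
  obtain ⟨p, hp⟩ := Finite.exists_min fun p : E × E => (P ^ n₀) p.1 p.2
  set δ := (P ^ n₀) p.1 p.2
  have hc1 : 1 - Fintype.card E * δ < 1 :=
    sub_lt_self _ (mul_pos (Nat.cast_pos.2 Fintype.card_pos) (hpos _ _))
  have hc0 : 0 ≤ 1 - Fintype.card E * δ := by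
    rw [sub_nonneg, ← sum_row_of_mem_rowStochastic (pow_mem hP n₀) (Classical.arbitrary E)]
    calc (Fintype.card E : ℝ) * δ = ∑ _j : E, δ := by simp
      _ ≤ _ := sum_le_sum fun j _ => hp (_, j)
  have : NeZero n₀ := ⟨hn₀⟩
  refine .of_norm_bounded ((summable_pow_div hc0 hc1 n₀).mul_right (2 * ‖f‖)) fun m => ?_
  exact (pi_norm_le_iff_of_nonneg (by positivity)).2 fun i =>
    abs_pow_mulVec_le hP (fun i j => hp (i, j)) hπ0 hπ1 hπs hf m i

lemma hasSum_pow_succ_mulVec {P : Matrix E E ℝ} {f : E → ℝ}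
    (hs : Summable fun m => P ^ m *ᵥ f) :
    HasSum (fun m => P ^ (m + 1) *ᵥ f) (P *ᵥ ∑' m, P ^ m *ᵥ f) := by
  simpa [Function.comp_def, mulVec_mulVec, pow_succ'] using
    hs.hasSum.map (mulVecLin P) (mulVecLin P).continuous_of_finiteDimensional

lemma mulVec_tsum_pow_mulVec {P : Matrix E E ℝ} {f : E → ℝ}
    (hs : Summable fun m => P ^ m *ᵥ f) :
    P *ᵥ ∑' m, P ^ m *ᵥ f = (∑' m, P ^ m *ᵥ f) - f := by
  have hsplit := hs.tsum_eq_zero_add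
  rw [(hasSum_pow_succ_mulVec hs).tsum_eq, pow_zero, one_mulVec] at hsplit
  rw [eq_sub_iff_add_eq', ← hsplit]

lemma sum_sum_mul_sq_sub_mulVec {P : Matrix E E ℝ} (hP : P ∈ rowStochastic ℝ E)
    {π : E → ℝ} (hπs : π ᵥ* P = π) (h : E → ℝ) :
    ∑ i, ∑ j, π i * P i j * (h j - (P *ᵥ h) i) ^ 2 =
      ∑ j, π j * h j ^ 2 - ∑ i, π i * (P *ᵥ h) i ^ 2 := by
  have hrow (i : E) : ∑ j, π i * P i j * (h j - (P *ᵥ h) i) ^ 2 =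
      ∑ j, π i * P i j * h j ^ 2 - π i * (P *ᵥ h) i ^ 2 := by
    have hPh : ∑ j, P i j * h j = (P *ᵥ h) i := rfl
    calc _ = ∑ j, (π i * P i j * h j ^ 2 - 2 * π i * (P *ᵥ h) i * (P i j * h j)
          + π i * (P *ᵥ h) i ^ 2 * P i j) := sum_congr rfl fun j _ => by ring
      _ = _ := by
        rw [sum_add_distrib, sum_sub_distrib, ← mul_sum, ← mul_sum, hPh,
          sum_row_of_mem_rowStochastic hP i]
        ring
  have hstat : ∑ i, ∑ j, π i * P i j * h j ^ 2 = ∑ j, π j * h j ^ 2 := by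
    rw [sum_comm]
    exact sum_congr rfl fun j _ => by rw [← sum_mul, ← congrFun hπs j]; rfl
  rw [sum_congr rfl fun i _ => hrow i, sum_sub_distrib, hstat]

theorem exists_eq_sub_of_tendsto_variance_zero {P : Matrix E E ℝ}
    (hP : P ∈ rowStochastic ℝ E) {n₀ : ℕ} (hn₀ : n₀ ≠ 0) (hpos : ∀ i j, 0 < (P ^ n₀) i j)
    {π : E → ℝ} (hπ0 : ∀ i, 0 ≤ π i) (hπ1 : ∑ i, π i = 1) (hπs : π ᵥ* P = π) {f : E → ℝ}
    (hf : π ⬝ᵥ f = 0)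
    (hσ : Tendsto (fun N : ℕ => ∑ i, π i * f i ^ 2 +
      2 * ∑ m ∈ range N, ∑ i, ∑ i', π i * f i * (P ^ (m + 1)) i i' * f i') atTop (𝓝 0)) :
    ∃ h : E → ℝ, ∀ i j, π i * P i j ≠ 0 → h j = h i - f i := by
  have hs := summable_pow_mulVec hP hn₀ hpos hπ0 hπ1 hπs hf
  set h := ∑' m, P ^ m *ᵥ f
  have hPh : P *ᵥ h = h - f := mulVec_tsum_pow_mulVec hs
  have hvar : ∑ i, π i * f i ^ 2 + 2 * ∑ i, π i * f i * (P *ᵥ h) i = 0 := by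
    refine tendsto_nhds_unique ?_ hσ
    have hcont : Continuous fun v : E → ℝ => ∑ i, π i * f i ^ 2 + 2 * ∑ i, π i * f i * v i := by
      fun_prop
    refine ((hcont.tendsto _).comp (hasSum_pow_succ_mulVec hs).tendsto_sum_nat).congr fun N => ?_
    simp only [Function.comp_apply, Finset.sum_apply, mulVec, dotProduct, mul_sum, mul_assoc]
    rw [sum_comm]
  have hnonneg (i j : E) : 0 ≤ π i * P i j * (h j - (P *ᵥ h) i) ^ 2 :=
    mul_nonneg (mul_nonneg (hπ0 i) (nonneg_of_mem_rowStochastic hP)) (sq_nonneg _)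
  have hzero : ∑ i, ∑ j, π i * P i j * (h j - (P *ᵥ h) i) ^ 2 = 0 := by
    rw [sum_sum_mul_sq_sub_mulVec hP hπs, ← hvar, hPh, mul_sum, ← sum_sub_distrib,
      ← sum_add_distrib]
    exact sum_congr rfl fun i _ => by simp only [Pi.sub_apply]; ring
  refine ⟨h, fun i j hij => ?_⟩
  have hrow := (sum_eq_zero_iff_of_nonneg fun i _ => sum_nonneg fun j _ => hnonneg i j).1
    hzero i (mem_univ i)
  have hij' := (sum_eq_zero_iff_of_nonneg fun j _ => hnonneg i j).1 hrow j (mem_univ j)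
  rw [mul_eq_zero, or_iff_right hij, sq_eq_zero_iff, sub_eq_zero] at hij'
  rw [hij', hPh, Pi.sub_apply]

end

def pathProb (P : Matrix E E ℝ) (π : E → ℝ) {n : ℕ} (x : Fin (n + 1) → E) : ℝ :=
  π (x 0) * ∏ k : Fin n, P (x k.castSucc) (x k.succ)

lemma pathProb_castSucc (P : Matrix E E ℝ) (π : E → ℝ) {n : ℕ} (x : Fin (n + 2) → E) :
    pathProb P π x =
      pathProb P π (x ∘ Fin.castSucc) * P (x (Fin.last n).castSucc) (x (Fin.last (n + 1))) := by
  simp only [pathProb, Fin.prod_univ_castSucc, Function.comp_apply, Fin.succ_castSucc,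
    Fin.succ_last, mul_assoc]
  rfl

variable [Fintype E] {P : Matrix E E ℝ} {π : E → ℝ}

lemma pathProb_le_last (hP0 : ∀ i j, 0 ≤ P i j) (hπ0 : ∀ i, 0 ≤ π i) (hπs : π ᵥ* P = π) :
    ∀ {n : ℕ} (x : Fin (n + 1) → E), pathProb P π x ≤ π (x (Fin.last n))
  | 0, x => by simp [pathProb]
  | n + 1, x => by
    rw [pathProb_castSucc, ← congrFun hπs]
    calc _ ≤ π (x (Fin.last n).castSucc) * P (x (Fin.last n).castSucc) (x (Fin.last (n + 1))) :=
          mul_le_mul_of_nonneg_right (pathProb_le_last hP0 hπ0 hπs _) (hP0 _ _)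
      _ ≤ _ := single_le_sum (f := fun l => π l * P l (x (Fin.last (n + 1))))
          (fun l _ => mul_nonneg (hπ0 l) (hP0 _ _)) (mem_univ _)

lemma measure_cylinder_eq_zero {Ω : Type*} [MeasurableSpace Ω] {μ : Measure Ω}
    [IsFiniteMeasure μ] {X : ℕ → Ω → E} (hP0 : ∀ i j, 0 ≤ P i j) (hπ0 : ∀ i, 0 ≤ π i)
    (hπs : π ᵥ* P = π) (hμ : ∀ (n : ℕ) (x : Fin (n + 1) → E),
      (μ {ω | ∀ k : Fin (n + 1), X k ω = x k}).toReal = pathProb P π x)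
    {k : ℕ} (x : Fin (k + 2) → E)
    (hx : π (x (Fin.last k).castSucc) * P (x (Fin.last k).castSucc) (x (Fin.last (k + 1))) = 0) :
    μ {ω | ∀ j : Fin (k + 2), X j ω = x j} = 0 := by
  have hle : (μ {ω | ∀ j : Fin (k + 2), X j ω = x j}).toReal ≤ 0 := by
    rw [hμ, pathProb_castSucc, ← hx]
    exact mul_le_mul_of_nonneg_right (pathProb_le_last hP0 hπ0 hπs _) (hP0 _ _)
  exact ((ENNReal.toReal_eq_zero_iff _).1 (hle.antisymm ENNReal.toReal_nonneg)).resolve_right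
    (measure_ne_top μ _)

lemma ae_forall_transition_weight_ne_zero {Ω : Type*} [MeasurableSpace Ω] {μ : Measure Ω}
    [IsFiniteMeasure μ]
    {X : ℕ → Ω → E} (hP0 : ∀ i j, 0 ≤ P i j) (hπ0 : ∀ i, 0 ≤ π i) (hπs : π ᵥ* P = π)
    (hμ : ∀ (n : ℕ) (x : Fin (n + 1) → E),
      (μ {ω | ∀ k : Fin (n + 1), X k ω = x k}).toReal = pathProb P π x) :
    ∀ᵐ ω ∂μ, ∀ k, π (X k ω) * P (X k ω) (X (k + 1) ω) ≠ 0 := by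
  refine ae_all_iff.2 fun k => ?_
  rw [ae_iff]
  refine measure_mono_null (fun ω hω => ?_) (measure_iUnion_null fun x : {x : Fin (k + 2) → E //
      π (x (Fin.last k).castSucc) * P (x (Fin.last k).castSucc) (x (Fin.last (k + 1))) = 0} =>
    measure_cylinder_eq_zero hP0 hπ0 hπs hμ x.1 x.2)
  exact mem_iUnion.2 ⟨⟨fun j => X j ω, by simpa using not_not.1 hω⟩, fun j => rfl⟩

lemma tendsto_sum_div_sqrt_of_eq_sub {x : ℕ → E} {f h : E → ℝ}
    (hx : ∀ k, h (x (k + 1)) = h (x k) - f (x k)) :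
    Tendsto (fun n : ℕ => (∑ j ∈ range n, f (x j)) / √n) atTop (𝓝 0) := by
  have hsum (n : ℕ) : ∑ j ∈ range n, f (x j) = h (x 0) - h (x n) := by
    rw [← sum_range_sub' fun j => h (x j)]
    exact sum_congr rfl fun j _ => by rw [hx]; ring
  refine squeeze_zero_norm (fun n => ?_) (tendsto_const_nhds (x := 2 * ‖h‖).div_atTop
    (Real.tendsto_sqrt_atTop.comp tendsto_natCast_atTop_atTop))
  rw [hsum, norm_div, Real.norm_of_nonneg (Real.sqrt_nonneg _)]
  refine div_le_div_of_nonneg_right ?_ (Real.sqrt_nonneg _)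
  calc ‖h (x 0) - h (x n)‖ ≤ ‖h (x 0)‖ + ‖h (x n)‖ := norm_sub_le _ _
    _ ≤ 2 * ‖h‖ := by linarith [norm_le_pi_norm h (x 0), norm_le_pi_norm h (x n)]

end MarkovChain

/-- For an ergodic (irreducible aperiodic) finite-state Markov chain started from its
stationary distribution `Π`, with `S_n(g) = ∑_{j<n} g(X_j)` and vanishing asymptotic
variance `σ_g² = 0`, almost surely `(1/√n)[S_n(g) − E_Π(S_n(g))] → 0`. -/
theorem markov_clt_degenerate {Ω : Type*} [MeasurableSpace Ω] (μ : Measure Ω)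
    [IsProbabilityMeasure μ] {E : Type*} [Fintype E] [DecidableEq E]
    (X : ℕ → Ω → E) (P : Matrix E E ℝ) (Pi : E → ℝ) (g : E → ℝ)
    (hP_nonneg : ∀ i j, 0 ≤ P i j) (hP_sum : ∀ i, ∑ j, P i j = 1)
    (hP_erg : ∃ n : ℕ, 1 ≤ n ∧ ∀ i j, 0 < (P ^ n) i j)
    (hPi_nonneg : ∀ i, 0 ≤ Pi i) (hPi_sum : ∑ i, Pi i = 1)
    (hPi_stat : ∀ j, ∑ i, Pi i * P i j = Pi j)
    (hμ : ∀ (n : ℕ) (x : Fin (n + 1) → E),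
      (μ {ω | ∀ k : Fin (n + 1), X k.val ω = x k}).toReal =
        Pi (x 0) * ∏ k : Fin n, P (x k.castSucc) (x k.succ))
    (hσ : Tendsto
      (fun N : ℕ =>
        (∑ i, Pi i * (g i - ∑ a, Pi a * g a) ^ 2) +
          2 * ∑ m ∈ Finset.range N, ∑ i, ∑ i',
            Pi i * (g i - ∑ a, Pi a * g a) * (P ^ (m + 1)) i i' * (g i' - ∑ a, Pi a * g a))
      atTop (nhds 0)) :
    ∀ᵐ ω ∂μ, Tendsto
      (fun n : ℕ =>
        ((∑ j ∈ Finset.range n, g (X j ω)) - n * ∑ a, Pi a * g a) / Real.sqrt n)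
      atTop (nhds 0) := by
  obtain ⟨n₀, hn₀, hpos⟩ := hP_erg
  have hP : P ∈ rowStochastic ℝ E := mem_rowStochastic_iff_sum.2 ⟨hP_nonneg, hP_sum⟩
  have hπs : Pi ᵥ* P = Pi := funext hPi_stat
  set m := ∑ a, Pi a * g a with hm
  have hcentred : Pi ⬝ᵥ (fun i => g i - m) = 0 := by
    simp only [dotProduct, mul_sub, sum_sub_distrib, ← sum_mul, hPi_sum, hm]
    ring
  obtain ⟨h, hh⟩ := MarkovChain.exists_eq_sub_of_tendsto_variance_zero hP (by omega) hpos
    hPi_nonneg hPi_sum hπs hcentred hσ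
  filter_upwards [MarkovChain.ae_forall_transition_weight_ne_zero hP_nonneg hPi_nonneg hπs hμ]
    with ω hω
  simpa [sum_sub_distrib] using MarkovChain.tendsto_sum_div_sqrt_of_eq_sub
    (x := fun k => X k ω) (f := fun i => g i - m) fun k => hh _ _ (hω k)
end
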